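/- arXiv:2407.12343 — 9 statements merged into one kernel-verified Lean document; each statement's English description precedes it below -/
import Mathlib

section
/- If E ⊆ ℝⁿ is Lebesgue measurable, then for all m ∈ [n, +∞) the set of m-density points of E^(n) equals the set of m-density points of E: (E^(n))^(m) = E^(m). In particular (E^(n))^(n) = E^(n). -/
open MeasureTheory Metric Filter Set Topology ENNReal

noncomputable section

/-- The set of `m`-density points of `E ⊆ ℝⁿ`:
`x` with `𝓛ⁿ(B(x,r) \ E) / rᵐ → 0` as `r → 0⁺`. -/
def dPts (n : ℕ) (E : Set (EuclideanSpace ℝ (Fin n))) (m : ℝ) :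
    Set (EuclideanSpace ℝ (Fin n)) :=
  {x | Tendsto (fun r : ℝ => volume (ball x r \ E) / ENNReal.ofReal (r ^ m))
      (𝓝[>] 0) (𝓝 0)}

open Classical in
/-- The density-degree function of `E`. -/
def dDeg (n : ℕ) (E : Set (EuclideanSpace ℝ (Fin n))) (x : EuclideanSpace ℝ (Fin n)) :
    ℝ≥0∞ :=
  if x ∈ dPts n E n then
    sSup (ENNReal.ofReal '' {m : ℝ | (n : ℝ) ≤ m ∧ x ∈ dPts n E m})
  else 0

/-!
Lebesgue's density theorem says that `E` and `E^(n)` differ by a null set. Since `m`-density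
points are defined through the measures of the sets `B(x,r) \ E`, they only depend on `E` up to
null sets, so `E^(n)` and `E` have the same `m`-density points for every `m`.
-/

theorem volume_ball_eq_rpow_mul {n : ℕ} (x : EuclideanSpace ℝ (Fin n)) {r : ℝ} (hr : 0 < r) :
    volume (ball x r) =
      ENNReal.ofReal (r ^ (n : ℝ)) * volume (ball (0 : EuclideanSpace ℝ (Fin n)) 1) := by
  rw [Measure.addHaar_ball_of_pos volume x hr, finrank_euclideanSpace_fin, Real.rpow_natCast]

theorem volume_closedBall_eq_rpow_mul {n : ℕ} (x : EuclideanSpace ℝ (Fin n)) {r : ℝ}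
    (hr : 0 ≤ r) :
    volume (closedBall x r) =
      ENNReal.ofReal (r ^ (n : ℝ)) * volume (ball (0 : EuclideanSpace ℝ (Fin n)) 1) := by
  rw [Measure.addHaar_closedBall volume x hr, finrank_euclideanSpace_fin, Real.rpow_natCast]

namespace dPts

variable {n : ℕ}

theorem congr_ae {E F : Set (EuclideanSpace ℝ (Fin n))} (h : E =ᵐ[volume] F) (m : ℝ) :
    dPts n E m = dPts n F m := by
  ext x
  have hball : ∀ r : ℝ, volume (ball x r \ E) = volume (ball x r \ F) := fun r =>
    measure_congr ((EventuallyEq.refl _ _).diff h)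
  simp only [dPts, mem_ofPred_eq, hball]

theorem mem_of_tendsto_measure_compl_inter_div {E : Set (EuclideanSpace ℝ (Fin n))}
    {x : EuclideanSpace ℝ (Fin n)}
    (hx : Tendsto (fun r => volume (Eᶜ ∩ closedBall x r) / volume (closedBall x r))
      (𝓝[>] 0) (𝓝 0)) :
    x ∈ dPts n E n := by
  set c := volume (ball (0 : EuclideanSpace ℝ (Fin n)) 1)
  have hc0 : c ≠ 0 := (measure_ball_pos volume _ one_pos).ne'
  have hc : c ≠ ∞ := measure_ball_lt_top.ne
  have hbound : ∀ᶠ r in 𝓝[>] (0 : ℝ),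
      volume (ball x r \ E) / ENNReal.ofReal (r ^ (n : ℝ)) ≤
        volume (Eᶜ ∩ closedBall x r) / volume (closedBall x r) * c := by
    filter_upwards [self_mem_nhdsWithin] with r (hr : 0 < r)
    rw [volume_closedBall_eq_rpow_mul x hr.le, ← ENNReal.mul_div_right_comm,
      ENNReal.mul_div_mul_right _ _ hc0 hc]
    gcongr
    exact fun y ⟨hy, hyE⟩ => ⟨hyE, ball_subset_closedBall hy⟩
  have hlim := ENNReal.Tendsto.mul_const hx (Or.inr hc)
  rw [zero_mul] at hlim
  exact tendsto_of_tendsto_of_tendsto_of_le_of_le' tendsto_const_nhds hlim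
    (Eventually.of_forall fun _ => zero_le) hbound

theorem disjoint_compl (E : Set (EuclideanSpace ℝ (Fin n))) :
    Disjoint (dPts n E n) (dPts n Eᶜ n) := by
  refine Set.disjoint_left.mpr fun x hE hEc => ?_
  set c := volume (ball (0 : EuclideanSpace ℝ (Fin n)) 1)
  have hc0 : c ≠ 0 := (measure_ball_pos volume _ one_pos).ne'
  have hsum := hE.add hEc
  rw [add_zero] at hsum
  -- `B(x,r) \ E` and `B(x,r) \ Eᶜ` cover `B(x,r)`, whose volume is `c rⁿ`.
  have hlow : ∀ᶠ r in 𝓝[>] (0 : ℝ), c ≤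
      volume (ball x r \ E) / ENNReal.ofReal (r ^ (n : ℝ)) +
        volume (ball x r \ Eᶜ) / ENNReal.ofReal (r ^ (n : ℝ)) := by
    filter_upwards [self_mem_nhdsWithin] with r (hr : 0 < r)
    have hX0 : ENNReal.ofReal (r ^ (n : ℝ)) ≠ 0 := (ENNReal.ofReal_pos.mpr (by positivity)).ne'
    rw [ENNReal.div_add_div_same, ENNReal.le_div_iff_mul_le (Or.inl hX0) (Or.inl ofReal_ne_top),
      mul_comm, ← volume_ball_eq_rpow_mul x hr]
    calc volume (ball x r) ≤ volume ((ball x r \ E) ∪ (ball x r \ Eᶜ)) :=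
          measure_mono fun y hy => by by_cases y ∈ E <;> simp_all
      _ ≤ _ := measure_union_le _ _
  exact hc0 (nonpos_iff_eq_zero.mp (ge_of_tendsto hsum hlow))

theorem ae_mem_of_mem {E : Set (EuclideanSpace ℝ (Fin n))} (hE : MeasurableSet E) :
    ∀ᵐ x, x ∈ E → x ∈ dPts n E n := by
  filter_upwards [Besicovitch.ae_tendsto_measure_inter_div_of_measurableSet volume hE.compl]
    with x hx hxE
  refine mem_of_tendsto_measure_compl_inter_div ?_
  rwa [indicator_of_notMem (not_not_intro hxE)] at hx

theorem ae_eq_self {E : Set (EuclideanSpace ℝ (Fin n))} (hE : MeasurableSet E) :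
    dPts n E n =ᵐ[volume] E := by
  refine eventuallyEq_set.mpr ?_
  filter_upwards [ae_mem_of_mem hE, ae_mem_of_mem hE.compl] with x hx hxc
  exact ⟨fun hxn => by_contra fun hxE =>
    (disjoint_compl E).notMem_of_mem_left hxn (hxc hxE), hx⟩

end dPts

theorem density_points_of_density_points_general (n : ℕ) (E : Set (EuclideanSpace ℝ (Fin n)))
    (hE : MeasurableSet E) (m : ℝ) :
    dPts n (dPts n E n) m = dPts n E m :=
  dPts.congr_ae (dPts.ae_eq_self hE) m

theorem density_points_of_density_points (n : ℕ) (E : Set (EuclideanSpace ℝ (Fin n)))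
    (hE : MeasurableSet E) (m : ℝ) (hm : (n : ℝ) ≤ m) :
    dPts n (dPts n E n) m = dPts n E m :=
  density_points_of_density_points_general n E hE m
end
end

section
/- For every set E ⊆ ℝⁿ and every m ∈ [n, +∞), the set E^(m) of m-density points of E is Lebesgue measurable. -/
/-!
Since balls are measurable, `𝓛ⁿ(B(x,r) \ E)` is the measure of `B(x,r)` for the restriction
of `𝓛ⁿ` to `Eᶜ`, even when `E` is not measurable; and measures of open balls are lower
semicontinuous in the centre. Hence `{x | 𝓛ⁿ(B(x,r) \ E) / rᵐ ≤ ε for all r ∈ (0, δ)}` is an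
intersection of closed sets, so closed, and `E^(m)` is a countable intersection of countable
unions of such sets.
-/

open MeasureTheory Metric Filter Set Topology ENNReal

noncomputable section

lemma tendsto_nhds_zero_iff_forall_le_inv_nat {ι : Type*} {l : Filter ι} {u : ι → ℝ≥0∞} :
    Tendsto u l (𝓝 0) ↔ ∀ k : ℕ, ∀ᶠ i in l, u i ≤ (k : ℝ≥0∞)⁻¹ := by
  rw [ENNReal.tendsto_nhds_zero]
  refine ⟨fun h k => h _ (ENNReal.inv_pos.2 (natCast_ne_top k)), fun h ε hε => ?_⟩
  obtain ⟨k, hk⟩ := ENNReal.exists_inv_nat_lt hε.ne'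
  exact (h k).mono fun i hi => hi.trans hk.le

lemma lowerSemicontinuous_measure_ball {X : Type*} [PseudoMetricSpace X] [MeasurableSpace X]
    (μ : Measure X) (r : ℝ) : LowerSemicontinuous fun x => μ (ball x r) := by
  intro x y (hy : y < μ (ball x r))
  have hsup : μ (ball x r) = ⨆ r' : Iio r, μ (ball x r') := by
    have hmono : Monotone fun r' : Iio r => ball x (r' : ℝ) := fun a b hab => ball_subset_ball hab
    rw [← hmono.measure_iUnion, iUnion_subtype]
    exact congrArg μ (biUnion_lt_ball x r).symm
  rw [hsup, lt_iSup_iff] at hy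
  obtain ⟨⟨r', hr'⟩, hy'⟩ := hy
  filter_upwards [ball_mem_nhds x (sub_pos.2 hr')] with z hz
  refine hy'.trans_le (measure_mono (ball_subset_ball' ?_))
  rw [mem_ball, dist_comm] at hz
  linarith

section

variable {X ι : Type*} [TopologicalSpace X] [MeasurableSpace X] [OpensMeasurableSpace X]
  {l : Filter ι} [l.IsCountablyGenerated] {f : X → ι → ℝ≥0∞}

lemma measurableSet_setOf_eventually_le (hf : ∀ᶠ i in l, LowerSemicontinuous (f · i))
    (c : ℝ≥0∞) : MeasurableSet {x | ∀ᶠ i in l, f x i ≤ c} := by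
  obtain ⟨L, hL, hfL⟩ := hf.exists_mem
  obtain ⟨s, hs⟩ := l.exists_antitone_basis
  have hbasis := hs.toHasBasis.restrict_subset hL
  have hunion :
      {x | ∀ᶠ i in l, f x i ≤ c} = ⋃ j, ⋃ (_ : s j ⊆ L), ⋂ i ∈ s j, {x | f x i ≤ c} := by
    ext x
    simp [hbasis.eventually_iff]
  rw [hunion]
  exact .iUnion fun j => .iUnion fun hj =>
    (isClosed_biInter fun i hi => (hfL i (hj hi)).isClosed_preimage c).measurableSet

lemma measurableSet_setOf_tendsto_nhds_zero (hf : ∀ᶠ i in l, LowerSemicontinuous (f · i)) :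
    MeasurableSet {x | Tendsto (f x) l (𝓝 0)} := by
  simp_rw [tendsto_nhds_zero_iff_forall_le_inv_nat, ofPred_forall]
  exact .iInter fun k => measurableSet_setOf_eventually_le hf _

end

theorem density_points_measurableSet_general (n : ℕ) (E : Set (EuclideanSpace ℝ (Fin n)))
    (m : ℝ) :
    MeasurableSet (dPts n E m) := by
  have hrestrict : dPts n E m = {x | Tendsto
      (fun r : ℝ => volume.restrict Eᶜ (ball x r) / ENNReal.ofReal (r ^ m)) (𝓝[>] 0) (𝓝 0)} := by
    ext x
    simp only [dPts, mem_ofPred_eq, Measure.restrict_apply measurableSet_ball, sdiff_eq]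
  rw [hrestrict]
  refine measurableSet_setOf_tendsto_nhds_zero ?_
  filter_upwards [self_mem_nhdsWithin] with r (hr : 0 < r)
  have hpos : ENNReal.ofReal (r ^ m) ≠ 0 := (ofReal_pos.2 (Real.rpow_pos_of_pos hr m)).ne'
  exact (ENNReal.continuous_div_const _ hpos).comp_lowerSemicontinuous
    (lowerSemicontinuous_measure_ball _ r) fun a b hab => ENNReal.div_le_div_right hab _

theorem density_points_measurableSet (n : ℕ) (E : Set (EuclideanSpace ℝ (Fin n)))
    (m : ℝ) (hm : (n : ℝ) ≤ m) :
    MeasurableSet (dPts n E m) :=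
  density_points_measurableSet_general n E m
end
end

section
/- Let E ⊆ ℝⁿ be measurable, x ∈ ℝⁿ, m ∈ [n, +∞), and let g : ℝⁿ → ℝ be continuous with g(x) ≠ 0. If ∫_{Eᶜ} g(y) φ((y−x)/r) d𝓛ⁿ(y) = o(rᵐ) as r → 0⁺ for every continuous compactly supported φ : ℝⁿ → ℝ, then x is an m-density point of E. -/
open MeasureTheory Metric Filter Set Topology ENNReal

noncomputable section

/-! Near `x` the function `g x * g` stays above `c = g x ^ 2 / 2 > 0`. Testing the hypothesis
with `φ = g x • b` for a bump `b` equal to `1` on the unit ball and supported in the ball of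
radius `2`, the integrand is nonnegative and at least `c` on `B(x, r) \ E` for small `r`, so
`c · 𝓛ⁿ(B(x, r) \ E)` is bounded by an integral that is `o(rᵐ)`. -/

theorem mul_measureReal_le_setIntegral_of_subset {X : Type*} [MeasurableSpace X]
    {μ : Measure X} {f : X → ℝ} {s t : Set X} {c : ℝ} (hts : t ⊆ s) (ht : MeasurableSet t)
    (hμt : μ t ≠ ∞) (hf : IntegrableOn f s μ) (hf₀ : 0 ≤ᵐ[μ.restrict s] f)
    (hc : ∀ y ∈ t, c ≤ f y) :
    c * μ.real t ≤ ∫ y in s, f y ∂μ :=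
  (setIntegral_ge_of_const_le_real ht hμt hc (hf.mono_set hts)).trans <|
    setIntegral_mono_set hf hf₀ hts.eventuallyLE

namespace ContDiffBump

variable {E : Type*} [NormedAddCommGroup E] [NormedSpace ℝ E] [HasContDiffBump E]
  (b : ContDiffBump (0 : E)) {x y : E} {t : ℝ}

theorem apply_inv_smul_sub_eq_one (ht : 0 < t) (hy : dist y x ≤ t * b.rIn) :
    b (t⁻¹ • (y - x)) = 1 := by
  apply b.one_of_mem_closedBall
  rwa [mem_closedBall_zero_iff, norm_smul, norm_inv, Real.norm_of_nonneg ht.le,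
    inv_mul_le_iff₀ ht, ← dist_eq_norm]

theorem apply_inv_smul_sub_eq_zero (ht : 0 < t) (hy : t * b.rOut ≤ dist y x) :
    b (t⁻¹ • (y - x)) = 0 := by
  apply b.zero_of_le_dist
  rwa [dist_zero_right, norm_smul, norm_inv, Real.norm_of_nonneg ht.le, le_inv_mul_iff₀ ht,
    ← dist_eq_norm]

end ContDiffBump

section BumpLowerBound

variable {E : Type*} [NormedAddCommGroup E] [NormedSpace ℝ E] [ProperSpace E]
  [HasContDiffBump E] [MeasurableSpace E] [BorelSpace E] {μ : Measure E}
  [IsFiniteMeasureOnCompacts μ]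

theorem mul_measureReal_ball_diff_le_setIntegral_bump {A : Set E} (hA : MeasurableSet A)
    (b : ContDiffBump (0 : E)) {x : E} {t c : ℝ} (ht : 0 < t) (hc : 0 ≤ c) {g : E → ℝ}
    (hg : Continuous g) (hcg : ∀ y ∈ ball x (t * b.rOut), c ≤ g y) :
    c * μ.real (ball x (t * b.rIn) \ A) ≤ ∫ y in Aᶜ, g y * b (t⁻¹ • (y - x)) ∂μ := by
  set f : E → ℝ := fun y => g y * b (t⁻¹ • (y - x))
  have hf_zero : ∀ y, t * b.rOut ≤ dist y x → f y = 0 := fun y hy => by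
    simp only [f, b.apply_inv_smul_sub_eq_zero ht hy, mul_zero]
  have hf_nonneg : ∀ y, 0 ≤ f y := fun y => by
    rcases lt_or_ge (dist y x) (t * b.rOut) with hy | hy
    · exact mul_nonneg (hc.trans (hcg y hy)) b.nonneg
    · exact (hf_zero y hy).ge
  have hf_ge : ∀ y ∈ ball x (t * b.rIn) \ A, c ≤ f y := fun y hy => by
    have hy' : dist y x ≤ t * b.rIn := (mem_ball.1 hy.1).le
    have hcy := hcg y (ball_subset_ball (by gcongr; exact b.rIn_lt_rOut.le) hy.1)
    simpa only [f, b.apply_inv_smul_sub_eq_one ht hy', mul_one] using hcy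
  have hf_cont : Continuous f := hg.mul (b.continuous.comp (by fun_prop))
  have hf_supp : HasCompactSupport f :=
    .intro (isCompact_closedBall x (t * b.rOut)) fun y hy => hf_zero y (not_le.1 hy).le
  exact mul_measureReal_le_setIntegral_of_subset (fun y hy => hy.2)
    (measurableSet_ball.diff hA) (measure_ne_top_of_subset sdiff_subset measure_ball_lt_top.ne)
    (hf_cont.integrable_of_hasCompactSupport hf_supp).integrableOn (ae_of_all _ hf_nonneg) hf_ge

end BumpLowerBound

theorem ENNReal.tendsto_div_ofReal_of_isLittleO {α : Type*} {l : Filter α} {f : α → ℝ≥0∞}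
    {g : α → ℝ} (hf : ∀ᶠ a in l, f a ≠ ∞) (hg : ∀ᶠ a in l, 0 < g a)
    (h : (fun a => (f a).toReal) =o[l] g) :
    Tendsto (fun a => f a / ENNReal.ofReal (g a)) l (𝓝 0) := by
  have hdiv := ENNReal.tendsto_ofReal h.tendsto_div_nhds_zero
  rw [ENNReal.ofReal_zero] at hdiv
  refine hdiv.congr' ?_
  filter_upwards [hf, hg] with a hfa hga
  rw [ENNReal.ofReal_div_of_pos hga, ENNReal.ofReal_toReal hfa]

theorem isBigO_of_const_mul_le {α : Type*} {l : Filter α} {u v : α → ℝ} {c : ℝ}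
    (hc : 0 < c) (hu : ∀ᶠ a in l, 0 ≤ u a) (huv : ∀ᶠ a in l, c * u a ≤ v a) :
    u =O[l] v := by
  refine .of_bound c⁻¹ ?_
  filter_upwards [hu, huv] with a hua hva
  rw [Real.norm_of_nonneg hua, le_inv_mul_iff₀ hc]
  exact hva.trans (le_abs_self _)

theorem density_point_of_integral_littleO_general (n : ℕ) (E : Set (EuclideanSpace ℝ (Fin n)))
    (hE : MeasurableSet E) (x : EuclideanSpace ℝ (Fin n)) (m : ℝ)
    (g : EuclideanSpace ℝ (Fin n) → ℝ) (hg : Continuous g) (hgx : g x ≠ 0)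
    (h : ∀ φ : EuclideanSpace ℝ (Fin n) → ℝ, Continuous φ → HasCompactSupport φ →
      (fun r : ℝ => ∫ y in Eᶜ, g y * φ (r⁻¹ • (y - x))) =o[𝓝[>] 0] fun r => r ^ m) :
    x ∈ dPts n E m := by
  have hgx2 : 0 < g x ^ 2 := by positivity
  set c := g x ^ 2 / 2
  have hc : 0 < c := half_pos hgx2
  obtain ⟨δ, hδ, hcg⟩ : ∃ δ > 0, ∀ y ∈ ball x δ, c ≤ g x * g y := by
    have hlim : Tendsto (fun y => g x * g y) (𝓝 x) (𝓝 (g x ^ 2)) := by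
      simpa only [sq] using tendsto_const_nhds.mul (hg.tendsto x)
    exact Metric.eventually_nhds_iff_ball.1
      ((hlim.eventually (lt_mem_nhds (half_lt_self hgx2))).mono fun _ => le_of_lt)
  let b : ContDiffBump (0 : EuclideanSpace ℝ (Fin n)) := ⟨1, 2, one_pos, one_lt_two⟩
  have hlower : ∀ᶠ r in 𝓝[>] 0, c * volume.real (ball x r \ E) ≤
      ∫ y in Eᶜ, g y * (g x * b (r⁻¹ • (y - x))) := by
    filter_upwards [Ioo_mem_nhdsGT (half_pos hδ)] with r ⟨hr, hrδ⟩
    have hball : ∀ y ∈ ball x (r * b.rOut), c ≤ g x * g y := fun y hy =>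
      hcg y (ball_subset_ball (by change r * 2 ≤ δ; linarith) hy)
    have hrIn : r * b.rIn = r := mul_one r
    have key := mul_measureReal_ball_diff_le_setIntegral_bump (μ := volume) hE b hr hc.le
      (g := fun y => g x * g y) (by fun_prop) hball
    simpa only [hrIn, mul_assoc, mul_left_comm (g x)] using key
  have hφ := h (fun z => g x * b z) (continuous_const.mul b.continuous)
    b.hasCompactSupport.mul_left
  exact ENNReal.tendsto_div_ofReal_of_isLittleO
    (.of_forall fun _ => measure_ne_top_of_subset sdiff_subset measure_ball_lt_top.ne)
    (eventually_mem_nhdsWithin.mono fun r hr => Real.rpow_pos_of_pos hr m)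
    ((isBigO_of_const_mul_le hc (.of_forall fun _ => measureReal_nonneg) hlower).trans_isLittleO
      hφ)

theorem density_point_of_integral_littleO (n : ℕ) (E : Set (EuclideanSpace ℝ (Fin n)))
    (hE : MeasurableSet E) (x : EuclideanSpace ℝ (Fin n)) (m : ℝ) (hm : (n : ℝ) ≤ m)
    (g : EuclideanSpace ℝ (Fin n) → ℝ) (hg : Continuous g) (hgx : g x ≠ 0)
    (h : ∀ φ : EuclideanSpace ℝ (Fin n) → ℝ, Continuous φ → HasCompactSupport φ →
      (fun r : ℝ => ∫ y in Eᶜ, g y * φ (r⁻¹ • (y - x))) =o[𝓝[>] 0] fun r => r ^ m) :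
    x ∈ dPts n E m :=
  density_point_of_integral_littleO_general n E hE x m g hg hgx h
end
end

section
/- Let E ⊆ ℝⁿ be measurable, x ∈ ℝⁿ, and m ∈ [n, +∞). Then x is an m-density point of E if and only if for every continuous compactly supported φ : ℝⁿ → ℝ one has ∫_{(E−x)/r} φ d𝓛ⁿ = ∫_{ℝⁿ} φ d𝓛ⁿ + o(r^{m−n}) as r → 0⁺. -/
open MeasureTheory Metric Filter Set Topology ENNReal

noncomputable section

/-!
With `T r z = x + r • z` one has `(E - x) / r = T r ⁻¹' E`, so the difference of the two
integrals is `-∫_{(T r ⁻¹' E)ᶜ} φ`, and `T r` scales Lebesgue measure by `r⁻ⁿ` while mapping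
`ball 0 R` onto `ball x (R r)`. If `|φ| ≤ C` and `supp φ ⊆ ball 0 R`, the difference is thus at most
`C r⁻ⁿ 𝓛ⁿ(B(x, R r) \ E)`; if `φ ≥ 0` with `φ ≥ 1` on `ball 0 1` (a bump function), it is at
least `r⁻ⁿ 𝓛ⁿ(B(x, r) \ E)`. Dividing by `r^(m-n)` turns both bounds into the density ratio.
-/

open Asymptotics Module

section Integrals

variable {X G : Type*} [MeasurableSpace X] {μ : Measure X}
  [NormedAddCommGroup G] [NormedSpace ℝ G] {s K : Set X}

theorem norm_setIntegral_le_mul_measureReal_inter {f : X → G} {C : ℝ} (hK : MeasurableSet K)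
    (hsK : μ (s ∩ K) < ∞) (hfK : Function.support f ⊆ K) (hC : ∀ y, ‖f y‖ ≤ C) :
    ‖∫ y in s, f y ∂μ‖ ≤ C * μ.real (s ∩ K) := by
  rw [← indicator_eq_self.2 hfK, setIntegral_indicator hK]
  exact norm_setIntegral_le_of_norm_le_const hsK fun y _ => hC y

theorem measureReal_inter_le_setIntegral {f : X → ℝ} (hs : MeasurableSet s) (hK : MeasurableSet K)
    (hsK : μ (s ∩ K) < ∞) (hf : IntegrableOn f s μ) (hf0 : 0 ≤ f) (hf1 : ∀ y ∈ K, 1 ≤ f y) :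
    μ.real (s ∩ K) ≤ ∫ y in s, f y ∂μ :=
  calc μ.real (s ∩ K) = ∫ _ in s ∩ K, (1 : ℝ) ∂μ := by simp
    _ ≤ ∫ y in s ∩ K, f y ∂μ :=
      setIntegral_mono_on (integrableOn_const hsK.ne) (hf.mono_set inter_subset_left)
        (hs.inter hK) fun y hy => hf1 y hy.2
    _ ≤ ∫ y in s, f y ∂μ :=
      setIntegral_mono_set hf (Eventually.of_forall hf0) inter_subset_left.eventuallyLE

end Integrals

section Rescaling

variable {F G : Type*} [NormedAddCommGroup F] [NormedSpace ℝ F] [NormedAddCommGroup G]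
  [NormedSpace ℝ G] {E : Set F} {x : F} {r : ℝ}

theorem image_smul_sub_eq_preimage_add_smul (hr : r ≠ 0) (S : Set F) :
    (fun y => r⁻¹ • (y - x)) '' S = (fun z => x + r • z) ⁻¹' S :=
  congrFun (image_eq_preimage_of_inverse (fun y => by simp [smul_smul, hr])
    (fun z => by simp [smul_smul, hr])) S

theorem preimage_add_smul_ball (hr : 0 < r) (R : ℝ) :
    (fun z => x + r • z) ⁻¹' ball x (R * r) = ball 0 R := by
  ext z
  simp only [mem_preimage, mem_ball, dist_eq_norm, add_sub_cancel_left, sub_zero, norm_smul,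
    Real.norm_of_nonneg hr.le, mul_comm R r]
  exact mul_lt_mul_iff_right₀ hr

variable [MeasurableSpace F] [BorelSpace F] (μ : Measure F)

theorem norm_setIntegral_image_smul_sub_sub_integral (hE : MeasurableSet E) (hr : r ≠ 0)
    {φ : F → G} (hφ : Integrable φ μ) :
    ‖(∫ y in (fun y => r⁻¹ • (y - x)) '' E, φ y ∂μ) - ∫ y, φ y ∂μ‖
      = ‖∫ y in ((fun z => x + r • z) ⁻¹' E)ᶜ, φ y ∂μ‖ := by
  have hT : Continuous fun z : F => x + r • z := by fun_prop
  rw [image_smul_sub_eq_preimage_add_smul hr, setIntegral_compl (hT.measurable hE) hφ,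
    norm_sub_rev]

variable [FiniteDimensional ℝ F] [μ.IsAddHaarMeasure]

theorem addHaar_real_preimage_add_smul (hr : 0 < r) (S : Set F) :
    μ.real ((fun z => x + r • z) ⁻¹' S) = (r ^ finrank ℝ F)⁻¹ * μ.real S := by
  have hT : (fun z => x + r • z) = (x + ·) ∘ (r • ·) := rfl
  rw [measureReal_def, hT, preimage_comp, Measure.addHaar_preimage_smul μ hr.ne',
    measure_preimage_add, ENNReal.toReal_mul, ENNReal.toReal_ofReal (abs_nonneg _),
    abs_of_pos (by positivity), measureReal_def]

theorem addHaar_real_compl_preimage_add_smul_inter_ball (hr : 0 < r) (R : ℝ) :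
    μ.real (((fun z => x + r • z) ⁻¹' E)ᶜ ∩ ball 0 R)
      = (r ^ finrank ℝ F)⁻¹ * μ.real (ball x (R * r) \ E) := by
  rw [← addHaar_real_preimage_add_smul μ hr, preimage_sdiff, preimage_add_smul_ball hr,
    sdiff_eq, inter_comm]

variable {R : ℝ}

theorem norm_setIntegral_image_smul_sub_sub_integral_le (hE : MeasurableSet E) (hr : 0 < r)
    {φ : F → G} (hφ : Integrable φ μ) {C : ℝ} (hC : ∀ y, ‖φ y‖ ≤ C)
    (hR : Function.support φ ⊆ ball 0 R) :
    ‖(∫ y in (fun y => r⁻¹ • (y - x)) '' E, φ y ∂μ) - ∫ y, φ y ∂μ‖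
      ≤ C * ((r ^ finrank ℝ F)⁻¹ * μ.real (ball x (R * r) \ E)) := by
  rw [norm_setIntegral_image_smul_sub_sub_integral μ hE hr.ne' hφ,
    ← addHaar_real_compl_preimage_add_smul_inter_ball μ hr]
  exact norm_setIntegral_le_mul_measureReal_inter measurableSet_ball
    (measure_inter_lt_top_of_right_ne_top measure_ball_lt_top.ne) hR hC

theorem le_norm_setIntegral_image_smul_sub_sub_integral (hE : MeasurableSet E) (hr : 0 < r)
    {φ : F → ℝ} (hφ : Integrable φ μ) (hφ0 : 0 ≤ φ) (hφ1 : ∀ y ∈ ball 0 R, 1 ≤ φ y) :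
    (r ^ finrank ℝ F)⁻¹ * μ.real (ball x (R * r) \ E)
      ≤ ‖(∫ y in (fun y => r⁻¹ • (y - x)) '' E, φ y ∂μ) - ∫ y, φ y ∂μ‖ := by
  have hT : Continuous fun z : F => x + r • z := by fun_prop
  rw [norm_setIntegral_image_smul_sub_sub_integral μ hE hr.ne' hφ,
    ← addHaar_real_compl_preimage_add_smul_inter_ball μ hr]
  exact (measureReal_inter_le_setIntegral (hT.measurable hE).compl measurableSet_ball
    (measure_inter_lt_top_of_right_ne_top measure_ball_lt_top.ne) hφ.integrableOn hφ0
    hφ1).trans (Real.le_norm_self _)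

end Rescaling

theorem isLittleO_rpow_nhdsGT_zero_iff_tendsto {f : ℝ → ℝ} {m : ℝ} :
    f =o[𝓝[>] 0] (fun r => r ^ m) ↔ Tendsto (fun r => f r / r ^ m) (𝓝[>] 0) (𝓝 0) :=
  isLittleO_iff_tendsto' <| eventually_mem_nhdsWithin.mono fun r (hr : 0 < r) h =>
    absurd h (Real.rpow_pos_of_pos hr m).ne'

theorem isLittleO_inv_pow_mul_iff (f : ℝ → ℝ) (d : ℕ) (m : ℝ) :
    (fun r => (r ^ d)⁻¹ * f r) =o[𝓝[>] 0] (fun r => r ^ (m - d))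
      ↔ f =o[𝓝[>] 0] (fun r => r ^ m) := by
  rw [isLittleO_rpow_nhdsGT_zero_iff_tendsto, isLittleO_rpow_nhdsGT_zero_iff_tendsto]
  refine tendsto_congr' (eventually_mem_nhdsWithin.mono fun r (hr : 0 < r) => ?_)
  simp only [Real.rpow_sub hr, Real.rpow_natCast]
  field_simp

theorem Asymptotics.IsLittleO.comp_const_mul_nhdsGT_rpow {f : ℝ → ℝ} {m c : ℝ}
    (hf : f =o[𝓝[>] 0] (fun r => r ^ m)) (hc : 0 < c) :
    (fun r => f (c * r)) =o[𝓝[>] 0] (fun r => r ^ m) := by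
  have hmul : Tendsto (c * ·) (𝓝[>] 0) (𝓝[>] 0) :=
    tendsto_iff_comap.2 (comap_mulLeft_nhdsGT_zero hc).ge
  refine (hf.comp_tendsto hmul).trans_isBigO ?_
  refine ((isBigO_refl (fun r : ℝ => r ^ m) _).const_mul_left (c ^ m)).congr' ?_ .rfl
  filter_upwards [self_mem_nhdsWithin] with r hr
  exact (Real.mul_rpow hc.le hr.le).symm

theorem mem_dPts_iff_isLittleO {n : ℕ} {E : Set (EuclideanSpace ℝ (Fin n))}
    {x : EuclideanSpace ℝ (Fin n)} {m : ℝ} :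
    x ∈ dPts n E m ↔ (fun r => volume.real (ball x r \ E)) =o[𝓝[>] 0] (fun r => r ^ m) := by
  have hpos : ∀ᶠ r : ℝ in 𝓝[>] 0, 0 < r := self_mem_nhdsWithin
  have hfin : ∀ r, volume (ball x r \ E) ≠ ∞ :=
    fun r => (measure_mono sdiff_subset |>.trans_lt measure_ball_lt_top).ne
  rw [isLittleO_rpow_nhdsGT_zero_iff_tendsto, dPts, mem_ofPred_eq]
  constructor
  · intro h
    refine ((ENNReal.tendsto_toReal zero_ne_top).comp h).congr' (hpos.mono fun r hr => ?_)
    simp [ENNReal.toReal_div, ENNReal.toReal_ofReal (Real.rpow_nonneg hr.le m), measureReal_def]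
  · intro h
    refine (ENNReal.ofReal_zero ▸ ENNReal.tendsto_ofReal h).congr' (hpos.mono fun r hr => ?_)
    rw [ENNReal.ofReal_div_of_pos (Real.rpow_pos_of_pos hr m), measureReal_def,
      ENNReal.ofReal_toReal (hfin r)]

theorem density_point_iff_rescaled_integral_general (n : ℕ) (E : Set (EuclideanSpace ℝ (Fin n)))
    (hE : MeasurableSet E) (x : EuclideanSpace ℝ (Fin n)) (m : ℝ) :
    x ∈ dPts n E m ↔
      ∀ φ : EuclideanSpace ℝ (Fin n) → ℝ, Continuous φ → HasCompactSupport φ →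
        (fun r : ℝ => (∫ y in (fun y => r⁻¹ • (y - x)) '' E, φ y) - ∫ y, φ y) =o[𝓝[>] 0]
          fun r => r ^ (m - n) := by
  have hpos : ∀ᶠ r : ℝ in 𝓝[>] 0, 0 < r := self_mem_nhdsWithin
  rw [mem_dPts_iff_isLittleO]
  constructor
  · intro hD φ hφ hφs
    obtain ⟨C, hC⟩ := hφs.exists_bound_of_continuous hφ
    obtain ⟨R, hR, hsupp⟩ := hφs.isBounded.subset_ball_lt 0 0
    refine IsBigO.trans_isLittleO ?_
      ((isLittleO_inv_pow_mul_iff _ n m).2 (hD.comp_const_mul_nhdsGT_rpow hR))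
    refine IsBigO.of_bound C (hpos.mono fun r hr => ?_)
    have hbound := norm_setIntegral_image_smul_sub_sub_integral_le volume (x := x) hE hr
      (hφ.integrable_of_hasCompactSupport hφs) hC (subset_tsupport φ |>.trans hsupp)
    rw [finrank_euclideanSpace_fin] at hbound
    exact hbound.trans
      (mul_le_mul_of_nonneg_left (Real.le_norm_self _) ((norm_nonneg _).trans (hC x)))
  · intro h
    let f : ContDiffBump (0 : EuclideanSpace ℝ (Fin n)) := ⟨1, 2, one_pos, one_lt_two⟩
    rw [← isLittleO_inv_pow_mul_iff _ n m]
    refine IsBigO.trans_isLittleO (IsBigO.of_bound' (hpos.mono fun r hr => ?_))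
      (h f f.continuous f.hasCompactSupport)
    have hbound := le_norm_setIntegral_image_smul_sub_sub_integral volume (x := x) (R := 1) hE hr
      (f.continuous.integrable_of_hasCompactSupport f.hasCompactSupport) (fun _ => f.nonneg)
      (fun y hy => (f.one_of_mem_closedBall (ball_subset_closedBall hy)).ge)
    rw [finrank_euclideanSpace_fin, one_mul] at hbound
    exact (Real.norm_of_nonneg (by positivity)).trans_le hbound

theorem density_point_iff_rescaled_integral (n : ℕ) (E : Set (EuclideanSpace ℝ (Fin n)))
    (hE : MeasurableSet E) (x : EuclideanSpace ℝ (Fin n)) (m : ℝ) (hm : (n : ℝ) ≤ m) :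
    x ∈ dPts n E m ↔
      ∀ φ : EuclideanSpace ℝ (Fin n) → ℝ, Continuous φ → HasCompactSupport φ →
        (fun r : ℝ => (∫ y in (fun y => r⁻¹ • (y - x)) '' E, φ y) - ∫ y, φ y) =o[𝓝[>] 0]
          fun r => r ^ (m - n) :=
  density_point_iff_rescaled_integral_general n E hE x m
end
end

section
/- Let E ⊆ ℝⁿ be measurable, m ∈ [n, +∞), x an m-density point of E, and Γ : ℝⁿ → ℝ measurable and continuous at x. Suppose there exists a continuous compactly supported ψ with ∫ψ d𝓛ⁿ ≠ 0, measurable functions g₁,…,g_k bounded in a neighborhood of x, and continuous compactly supported φ₁,…,φ_k, such that for all small r > 0: |∫_{ℝⁿ} Γ(y) ψ((y−x)/r) d𝓛ⁿ(y)| ≤ r^{n−m} Σ_{i=1}^k |∫_{Eᶜ} g_i(y) φ_i((y−x)/r) d𝓛ⁿ(y)|. Then Γ(x) = 0. -/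
open MeasureTheory Metric Filter Set Topology ENNReal

noncomputable section

/-! Substituting `y = x + r • z`, the left side of the hypothesis is `rⁿ ∫ Γ (x + r • z) ψ z`, and
that integral tends to `Γ x ∫ ψ` as `r → 0⁺`. Each integral over `Eᶜ` on the right only sees the
ball `B(x, r ρ)` containing the rescaled support of `φ i`, on which `g i * φ i` is bounded, so it
is `O(𝓛ⁿ(B(x, r ρ) \ E)) = o(rᵐ)` at an `m`-density point. Dividing by `rⁿ` gives `Γ x ∫ ψ = 0`. -/

open Asymptotics

section Rescaling

variable {V : Type*} [NormedAddCommGroup V] [NormedSpace ℝ V] [MeasurableSpace V] [BorelSpace V]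

theorem integral_mul_comp_inv_smul_sub [FiniteDimensional ℝ V] (μ : Measure V)
    [μ.IsAddHaarMeasure] (Γ ψ : V → ℝ) (x : V) {r : ℝ} (hr : 0 < r) :
    ∫ y, Γ y * ψ (r⁻¹ • (y - x)) ∂μ = r ^ Module.finrank ℝ V * ∫ z, Γ (x + r • z) * ψ z ∂μ := by
  have hshift := (integral_add_left_eq_self (μ := μ) (fun y ↦ Γ y * ψ (r⁻¹ • (y - x))) x).symm
  simp only [add_sub_cancel_left] at hshift
  rw [hshift, ← smul_eq_mul,
    ← Measure.integral_comp_inv_smul_of_nonneg μ (fun z ↦ Γ (x + r • z) * ψ z) hr.le]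
  simp only [smul_inv_smul₀ hr.ne']

theorem tendsto_integral_comp_add_smul_mul (μ : Measure V) [IsFiniteMeasureOnCompacts μ]
    {Γ ψ : V → ℝ} {x : V} (hΓ : Measurable Γ) (hΓx : ContinuousAt Γ x) (hψ : Continuous ψ)
    (hψc : HasCompactSupport ψ) :
    Tendsto (fun r : ℝ ↦ ∫ z, Γ (x + r • z) * ψ z ∂μ) (𝓝 0) (𝓝 (Γ x * ∫ z, ψ z ∂μ)) := by
  set B := |Γ x| + 1
  have hΓB : ∀ᶠ y in 𝓝 x, |Γ y| ≤ B :=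
    ((continuous_abs.continuousAt.comp hΓx).eventually_lt_const (lt_add_one _)).mono
      fun _ hy ↦ hy.le
  have hmove : ∀ z, Tendsto (fun p : ℝ × V ↦ x + p.1 • p.2) (𝓝 (0, z)) (𝓝 x) := fun z ↦
    (continuous_const.add continuous_smul).tendsto' _ _ (by simp)
  have hbdd : ∀ᶠ r in 𝓝 (0 : ℝ), ∀ z ∈ tsupport ψ, |Γ (x + r • z)| ≤ B :=
    hψc.isCompact.eventually_forall_of_forall_eventually fun z _ ↦ (hmove z).eventually hΓB
  rw [← integral_const_mul]
  refine tendsto_integral_filter_of_dominated_convergence (fun z ↦ B * |ψ z|) ?_ ?_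
    ((hψ.norm.integrable_of_hasCompactSupport hψc.norm).const_mul B) ?_
  · refine Eventually.of_forall fun r ↦ Measurable.aestronglyMeasurable ?_
    have hmap : Measurable fun z : V ↦ x + r • z :=
      (continuous_const.add (continuous_const_smul r)).measurable
    exact (hΓ.comp hmap).mul hψ.measurable
  · filter_upwards [hbdd] with r hr
    refine Eventually.of_forall fun z ↦ ?_
    rw [Real.norm_eq_abs, abs_mul]
    by_cases hz : z ∈ tsupport ψ
    · exact mul_le_mul_of_nonneg_right (hr z hz) (abs_nonneg _)
    · simp [image_eq_zero_of_notMem_tsupport hz]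
  · refine Eventually.of_forall fun z ↦ Tendsto.mul_const (ψ z) (hΓx.tendsto.comp ?_)
    exact (continuous_const.add (continuous_id.smul continuous_const)).tendsto' 0 x (by simp)

theorem abs_setIntegral_mul_comp_inv_smul_sub_le (μ : Measure V) (t : Set V) (g φ : V → ℝ)
    (x : V) {r ρ C M : ℝ} (hr : 0 < r) (hball : μ (ball x (r * ρ)) < ∞)
    (hg : ∀ y ∈ ball x (r * ρ), |g y| ≤ C) (hφ : ∀ z, |φ z| ≤ M)
    (hsupp : Function.support φ ⊆ ball 0 ρ) :
    |∫ y in t, g y * φ (r⁻¹ • (y - x)) ∂μ| ≤ C * M * μ.real (ball x (r * ρ) ∩ t) := by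
  have hvanish : ∀ y ∉ ball x (r * ρ), g y * φ (r⁻¹ • (y - x)) = 0 := by
    intro y hy
    suffices r⁻¹ • (y - x) ∉ Function.support φ by simp_all
    intro hmem
    have := hsupp hmem
    rw [mem_ball_zero_iff, norm_smul, Real.norm_eq_abs, abs_of_pos (inv_pos.2 hr),
      inv_mul_lt_iff₀ hr, ← dist_eq_norm] at this
    exact hy this
  rw [← setIntegral_eq_integral_of_forall_compl_eq_zero (μ := μ.restrict t) hvanish,
    ← Real.norm_eq_abs, ← measureReal_restrict_apply measurableSet_ball]
  refine norm_setIntegral_le_of_norm_le_const ?_ fun y hy ↦ ?_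
  · exact (Measure.restrict_apply_le t _).trans_lt hball
  · rw [Real.norm_eq_abs, abs_mul]
    exact mul_le_mul (hg y hy) (hφ _) (abs_nonneg _) ((abs_nonneg _).trans (hg y hy))

end Rescaling

section Density

variable {n : ℕ} {E : Set (EuclideanSpace ℝ (Fin n))} {m : ℝ} {x : EuclideanSpace ℝ (Fin n)}

theorem isLittleO_measureReal_ball_diff_of_mem_dPts (hx : x ∈ dPts n E m) :
    (fun r : ℝ ↦ volume.real (ball x r \ E)) =o[𝓝[>] 0] fun r ↦ r ^ m := by
  have hpos : ∀ᶠ r in 𝓝[>] (0 : ℝ), 0 < r := self_mem_nhdsWithin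
  rw [isLittleO_iff_tendsto' (hpos.mono fun r hr h ↦ absurd h (Real.rpow_pos_of_pos hr m).ne')]
  have hreal := (ENNReal.tendsto_toReal zero_ne_top).comp hx
  rw [ENNReal.toReal_zero] at hreal
  refine hreal.congr' (hpos.mono fun r hr ↦ ?_)
  simp only [Function.comp_apply, ENNReal.toReal_div, measureReal_def,
    ENNReal.toReal_ofReal (Real.rpow_nonneg hr.le m)]

theorem isLittleO_setIntegral_compl_of_mem_dPts (hx : x ∈ dPts n E m)
    {g φ : EuclideanSpace ℝ (Fin n) → ℝ} (hgb : ∃ C, ∀ᶠ y in 𝓝 x, |g y| ≤ C)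
    (hφ : Continuous φ) (hφc : HasCompactSupport φ) :
    (fun r : ℝ ↦ ∫ y in Eᶜ, g y * φ (r⁻¹ • (y - x))) =o[𝓝[>] 0] fun r ↦ r ^ m := by
  obtain ⟨C, hC⟩ := hgb
  obtain ⟨δ, hδ, hCδ⟩ := Metric.eventually_nhds_iff_ball.mp hC
  obtain ⟨M, hM⟩ := hφ.bounded_above_of_compact_support hφc
  obtain ⟨ρ, hρ, hsupp⟩ := hφc.isBounded.subset_ball_lt 0 0
  have hscale : Tendsto (· * ρ) (𝓝 (0 : ℝ)) (𝓝 0) := (continuous_mul_const ρ).tendsto' 0 0 (by simp)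
  have hscale' : Tendsto (· * ρ) (𝓝[>] (0 : ℝ)) (𝓝[>] 0) :=
    tendsto_nhdsWithin_iff.mpr ⟨hscale.mono_left nhdsWithin_le_nhds,
      eventually_mem_nhdsWithin.mono fun r hr ↦ mul_pos hr hρ⟩
  have hpow : (fun r : ℝ ↦ (r * ρ) ^ m) =O[𝓝[>] 0] fun r ↦ r ^ m :=
    ((isBigO_refl (fun r : ℝ ↦ r ^ m) _).const_mul_left (ρ ^ m)).congr'
      (eventually_mem_nhdsWithin.mono fun r hr ↦ by
        simp only [Real.mul_rpow (le_of_lt hr) hρ.le, mul_comm (ρ ^ m)]) EventuallyEq.rfl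
  have hsmall : (fun r : ℝ ↦ volume.real (ball x (r * ρ) \ E)) =o[𝓝[>] 0] fun r ↦ r ^ m :=
    ((isLittleO_measureReal_ball_diff_of_mem_dPts hx).comp_tendsto hscale').trans_isBigO hpow
  refine IsBigO.trans_isLittleO (IsBigO.of_bound (C * M) ?_) hsmall
  filter_upwards [self_mem_nhdsWithin, (hscale.eventually (gt_mem_nhds hδ)).filter_mono
    nhdsWithin_le_nhds] with r hr hrδ
  rw [Real.norm_eq_abs, Real.norm_of_nonneg measureReal_nonneg, Set.sdiff_eq]
  exact abs_setIntegral_mul_comp_inv_smul_sub_le volume Eᶜ g φ x hr measure_ball_lt_top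
    (fun y hy ↦ hCδ y (ball_subset_ball hrδ.le hy)) hM (subset_tsupport φ |>.trans hsupp)

end Density

theorem eq_zero_of_integral_bound_general (n : ℕ) (E : Set (EuclideanSpace ℝ (Fin n)))
    (x : EuclideanSpace ℝ (Fin n)) (m : ℝ)
    (hx : x ∈ dPts n E m)
    (Γ : EuclideanSpace ℝ (Fin n) → ℝ) (hΓ : Measurable Γ) (hΓx : ContinuousAt Γ x)
    (ψ : EuclideanSpace ℝ (Fin n) → ℝ) (hψ : Continuous ψ) (hψc : HasCompactSupport ψ)
    (hψi : ∫ y, ψ y ≠ 0)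
    (k : ℕ) (g : Fin k → EuclideanSpace ℝ (Fin n) → ℝ)
    (hgb : ∀ i, ∃ C : ℝ, ∀ᶠ y in 𝓝 x, |g i y| ≤ C)
    (φ : Fin k → EuclideanSpace ℝ (Fin n) → ℝ)
    (hφ : ∀ i, Continuous (φ i)) (hφc : ∀ i, HasCompactSupport (φ i))
    (hbound : ∀ᶠ r in 𝓝[>] (0 : ℝ),
      |∫ y, Γ y * ψ (r⁻¹ • (y - x))| ≤
        r ^ ((n : ℝ) - m) * ∑ i, |∫ y in Eᶜ, g i y * φ i (r⁻¹ • (y - x))|) :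
    Γ x = 0 := by
  set G := fun r : ℝ ↦ ∫ z, Γ (x + r • z) * ψ z
  set S := fun r : ℝ ↦ ∑ i, |∫ y in Eᶜ, g i y * φ i (r⁻¹ • (y - x))|
  have hG : Tendsto G (𝓝[>] 0) (𝓝 (Γ x * ∫ z, ψ z)) :=
    (tendsto_integral_comp_add_smul_mul volume hΓ hΓx hψ hψc).mono_left nhdsWithin_le_nhds
  have hS : Tendsto (fun r ↦ S r / r ^ m) (𝓝[>] 0) (𝓝 0) :=
    (IsLittleO.fun_sum fun i _ ↦ (isLittleO_setIntegral_compl_of_mem_dPts hx (hgb i) (hφ i)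
      (hφc i)).abs_left).tendsto_div_nhds_zero
  have hGS : ∀ᶠ r in 𝓝[>] 0, ‖G r‖ ≤ S r / r ^ m := by
    filter_upwards [hbound, self_mem_nhdsWithin] with r hr (hr0 : 0 < r)
    rw [integral_mul_comp_inv_smul_sub volume Γ ψ x hr0, finrank_euclideanSpace_fin, abs_mul,
      abs_of_pos (pow_pos hr0 n), Real.rpow_sub hr0, Real.rpow_natCast] at hr
    rw [Real.norm_eq_abs, le_div_iff₀ (Real.rpow_pos_of_pos hr0 m)]
    have hrn := pow_pos hr0 n
    have hrm := Real.rpow_pos_of_pos hr0 m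
    calc |G r| * r ^ m = r ^ n * |G r| * r ^ m / r ^ n := by field_simp
      _ ≤ r ^ n / r ^ m * S r * r ^ m / r ^ n := by gcongr
      _ = S r := by field_simp
  exact (mul_eq_zero.mp (tendsto_nhds_unique hG (squeeze_zero_norm' hGS hS))).resolve_right hψi

theorem eq_zero_of_integral_bound (n : ℕ) (E : Set (EuclideanSpace ℝ (Fin n)))
    (hE : MeasurableSet E) (x : EuclideanSpace ℝ (Fin n)) (m : ℝ) (hm : (n : ℝ) ≤ m)
    (hx : x ∈ dPts n E m)
    (Γ : EuclideanSpace ℝ (Fin n) → ℝ) (hΓ : Measurable Γ) (hΓx : ContinuousAt Γ x)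
    (ψ : EuclideanSpace ℝ (Fin n) → ℝ) (hψ : Continuous ψ) (hψc : HasCompactSupport ψ)
    (hψi : ∫ y, ψ y ≠ 0)
    (k : ℕ) (g : Fin k → EuclideanSpace ℝ (Fin n) → ℝ)
    (hg : ∀ i, Measurable (g i)) (hgb : ∀ i, ∃ C : ℝ, ∀ᶠ y in 𝓝 x, |g i y| ≤ C)
    (φ : Fin k → EuclideanSpace ℝ (Fin n) → ℝ)
    (hφ : ∀ i, Continuous (φ i)) (hφc : ∀ i, HasCompactSupport (φ i))
    (hbound : ∀ᶠ r in 𝓝[>] (0 : ℝ),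
      |∫ y, Γ y * ψ (r⁻¹ • (y - x))| ≤
        r ^ ((n : ℝ) - m) * ∑ i, |∫ y in Eᶜ, g i y * φ i (r⁻¹ • (y - x))|) :
    Γ x = 0 :=
  eq_zero_of_integral_bound_general n E x m hx Γ hΓ hΓx ψ hψ hψc hψi k g hgb φ hφ hφc hbound
end
end

section
/- If E, F ⊆ ℝⁿ are measurable and not equivalent (i.e., 𝓛ⁿ(E △ F) > 0), then the set {x ∈ ℝⁿ : d_E(x) ≠ d_F(x)} has positive Lebesgue measure. -/
open MeasureTheory Metric Filter Set Topology ENNReal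

noncomputable section

/-!
By the Lebesgue density theorem, almost every point of `E \ F` is an `n`-density point of `E`
and not of `F`. At such a point `d_F = 0`, while `d_E ≥ n > 0`; in dimension `0` the space is a
single point, so at a `0`-density point of `E` we have `𝓛⁰(B(x,r) \ E) = 0`, making it an `m`-density
point for every `m` and again `d_E > 0`. The case of `F \ E` is symmetric.
-/

lemma measure_sdiff_div_eq_one_sub {α : Type*} [MeasurableSpace α] (μ : Measure α)
    {s S : Set α} (hS : MeasurableSet S) (h0 : μ s ≠ 0) (htop : μ s ≠ ∞) :
    μ (s \ S) / μ s = 1 - μ (s ∩ S) / μ s := by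
  refine ENNReal.eq_sub_of_add_eq (ENNReal.div_ne_top (measure_ne_top_of_subset
    inter_subset_left htop) h0) ?_
  rw [ENNReal.div_add_div_same, measure_sdiff_add_inter _ hS, ENNReal.div_self h0 htop]

lemma addHaar_ball_sdiff {E : Type*} [NormedAddCommGroup E] [NormedSpace ℝ E]
    [MeasurableSpace E] [BorelSpace E] [FiniteDimensional ℝ E] (μ : Measure E)
    [μ.IsAddHaarMeasure] (x : E) {r : ℝ} (hr : r ≠ 0) (S : Set E) :
    μ (ball x r \ S) = μ (closedBall x r \ S) := by
  rw [← closedBall_sdiff_sphere, sdiff_right_comm,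
    measure_sdiff_null (Measure.addHaar_sphere_of_ne_zero μ x hr)]

variable {n : ℕ}

lemma volume_ball_sdiff_div_rpow {S : Set (EuclideanSpace ℝ (Fin n))} (hS : MeasurableSet S)
    (x : EuclideanSpace ℝ (Fin n)) {r : ℝ} (hr : 0 < r) :
    volume (ball x r \ S) / ENNReal.ofReal (r ^ (n : ℝ)) =
      (1 - volume (closedBall x r ∩ S) / volume (closedBall x r)) *
        volume (ball (0 : EuclideanSpace ℝ (Fin n)) 1) := by
  have hc0 : volume (ball (0 : EuclideanSpace ℝ (Fin n)) 1) ≠ 0 :=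
    (measure_ball_pos _ _ one_pos).ne'
  rw [← measure_sdiff_div_eq_one_sub _ hS (measure_closedBall_pos _ _ hr).ne'
      measure_closedBall_lt_top.ne, addHaar_ball_sdiff _ x hr.ne',
    Measure.addHaar_closedBall _ x hr.le, finrank_euclideanSpace_fin, Real.rpow_natCast,
    ← ENNReal.mul_div_right_comm, ENNReal.mul_div_mul_right _ _ hc0 measure_ball_lt_top.ne]

lemma ae_mem_dPts_iff {S : Set (EuclideanSpace ℝ (Fin n))} (hS : MeasurableSet S) :
    ∀ᵐ x, x ∈ dPts n S n ↔ x ∈ S := by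
  filter_upwards [Besicovitch.ae_tendsto_measure_inter_div_of_measurableSet volume hS]
    with x hx
  set c := volume (ball (0 : EuclideanSpace ℝ (Fin n)) 1)
  have hc0 : c ≠ 0 := (measure_ball_pos _ _ one_pos).ne'
  have hlim : Tendsto (fun r : ℝ => volume (ball x r \ S) / ENNReal.ofReal (r ^ (n : ℝ)))
      (𝓝[>] 0) (𝓝 ((1 - S.indicator 1 x) * c)) := by
    refine (ENNReal.Tendsto.mul_const (ENNReal.Tendsto.sub tendsto_const_nhds hx
      (Or.inl one_ne_top)) (Or.inr measure_ball_lt_top.ne)).congr' ?_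
    filter_upwards [self_mem_nhdsWithin] with r hr
    rw [volume_ball_sdiff_div_rpow hS x hr, inter_comm]
  have hiff : x ∈ dPts n S n ↔ (1 - S.indicator 1 x) * c = 0 :=
    ⟨tendsto_nhds_unique hlim, fun h0 => by rwa [h0] at hlim⟩
  by_cases hxS : x ∈ S <;> simp [hiff, hxS, hc0]

lemma mem_dPts_of_volume_ball_sdiff_eq_zero {E : Set (EuclideanSpace ℝ (Fin n))}
    {x : EuclideanSpace ℝ (Fin n)} {r : ℝ} (hr : 0 < r) (h : volume (ball x r \ E) = 0)
    (m : ℝ) : x ∈ dPts n E m := by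
  refine tendsto_const_nhds.congr' ?_
  filter_upwards [Ioo_mem_nhdsGT hr] with s hs
  rw [measure_mono_null (sdiff_subset_sdiff_left (ball_subset_ball hs.2.le)) h,
    ENNReal.zero_div]

lemma volume_ball_sdiff_eq_zero_of_mem_dPts_zero {E : Set (EuclideanSpace ℝ (Fin 0))}
    {x : EuclideanSpace ℝ (Fin 0)} (hx : x ∈ dPts 0 E 0) : volume (ball x 1 \ E) = 0 := by
  refine tendsto_nhds_unique (tendsto_const_nhds.congr' ?_) hx
  filter_upwards [self_mem_nhdsWithin] with r (hr : 0 < r)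
  rw [ball_eq_singleton_of_subsingleton hr, ball_eq_singleton_of_subsingleton one_pos,
    Real.rpow_zero, ENNReal.ofReal_one, div_one]

lemma exists_pos_mem_dPts {E : Set (EuclideanSpace ℝ (Fin n))} {x : EuclideanSpace ℝ (Fin n)}
    (hx : x ∈ dPts n E n) : ∃ m : ℝ, 0 < m ∧ (n : ℝ) ≤ m ∧ x ∈ dPts n E m := by
  cases n with
  | zero =>
    rw [Nat.cast_zero] at hx
    exact ⟨1, one_pos, by norm_num, mem_dPts_of_volume_ball_sdiff_eq_zero one_pos
      (volume_ball_sdiff_eq_zero_of_mem_dPts_zero hx) 1⟩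
  | succ k => exact ⟨(k + 1 : ℕ), by positivity, le_rfl, hx⟩

lemma ofReal_le_dDeg {E : Set (EuclideanSpace ℝ (Fin n))} {x : EuclideanSpace ℝ (Fin n)}
    (hx : x ∈ dPts n E n) {m : ℝ} (hnm : (n : ℝ) ≤ m) (hxm : x ∈ dPts n E m) :
    ENNReal.ofReal m ≤ dDeg n E x := by
  rw [dDeg, if_pos hx]
  exact le_sSup ⟨m, ⟨hnm, hxm⟩, rfl⟩

lemma dDeg_ne_zero_of_mem_dPts {E : Set (EuclideanSpace ℝ (Fin n))}
    {x : EuclideanSpace ℝ (Fin n)} (hx : x ∈ dPts n E n) : dDeg n E x ≠ 0 := by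
  obtain ⟨m, hm0, hnm, hxm⟩ := exists_pos_mem_dPts hx
  exact ((ENNReal.ofReal_pos.2 hm0).trans_le (ofReal_le_dDeg hx hnm hxm)).ne'

lemma dDeg_ne_of_mem_dPts_of_notMem {E F : Set (EuclideanSpace ℝ (Fin n))}
    {x : EuclideanSpace ℝ (Fin n)} (hE : x ∈ dPts n E n) (hF : x ∉ dPts n F n) :
    dDeg n E x ≠ dDeg n F x := by
  have hF0 : dDeg n F x = 0 := if_neg hF
  rw [hF0]
  exact dDeg_ne_zero_of_mem_dPts hE

theorem densityDeg_ne_of_not_ae_eq (n : ℕ) (E F : Set (EuclideanSpace ℝ (Fin n)))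
    (hE : MeasurableSet E) (hF : MeasurableSet F)
    (h : 0 < volume ((E \ F) ∪ (F \ E))) :
    0 < volume {x | dDeg n E x ≠ dDeg n F x} := by
  refine h.trans_le (measure_mono_ae ?_)
  filter_upwards [ae_mem_dPts_iff hE, ae_mem_dPts_iff hF] with x hxE hxF hx
  rcases hx with ⟨hxE', hxF'⟩ | ⟨hxF', hxE'⟩
  · exact dDeg_ne_of_mem_dPts_of_notMem (hxE.2 hxE') (mt hxF.1 hxF')
  · exact (dDeg_ne_of_mem_dPts_of_notMem (hxF.2 hxF') (mt hxE.1 hxE')).symm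
end
end

section
/- In ℝ, let E₁ = (−1, 0) and E₂ = (0, 1). Then d_{E₁∪E₂} = +∞·χ_{(−1,1)} while max(d_{E₁}, d_{E₂}) = +∞·χ_{(−1,1)\{0}}; in particular the identity d_{E₁∪E₂} = max(d_{E₁}, d_{E₂}) fails. -/
open MeasureTheory Metric Filter Set Topology ENNReal

noncomputable section

/-- The set of `m`-density points of `E ⊆ ℝ`. -/
def dPts1 (E : Set ℝ) (m : ℝ) : Set ℝ :=
  {x | Tendsto (fun r : ℝ => volume (ball x r \ E) / ENNReal.ofReal (r ^ m))
      (𝓝[>] 0) (𝓝 0)}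

open Classical in
/-- The density-degree function of `E ⊆ ℝ`. -/
def dDeg1 (E : Set ℝ) (x : ℝ) : ℝ≥0∞ :=
  if x ∈ dPts1 E 1 then
    sSup (ENNReal.ofReal '' {m : ℝ | 1 ≤ m ∧ x ∈ dPts1 E m})
  else 0

/-! The density degree sees `E` only through the measures `volume (ball x r \ E)`, so it does
not change when `E` is modified on a null set. Hence `(-1, 0) ∪ (0, 1)`, which is `(-1, 1)`
minus a point, has the degree of the open interval `(-1, 1)`: `⊤` on it and `0` off it. For
each half separately, `0` is an endpoint, so a half-ball of measure `r` is missing from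
`ball 0 r` and `0` is not even a density point. -/

variable {E F : Set ℝ} {x : ℝ}

lemma dPts1_congr_ae (h : E =ᵐ[volume] F) : dPts1 E = dPts1 F := by
  ext m x
  have hvol : ∀ r, volume (ball x r \ E) = volume (ball x r \ F) := fun r =>
    measure_congr (ae_eq_set_sdiff EventuallyEq.rfl h)
  simp only [dPts1, mem_ofPred_eq, hvol]

lemma dDeg1_congr_ae (h : E =ᵐ[volume] F) : dDeg1 E = dDeg1 F := by
  unfold dDeg1
  rw [dPts1_congr_ae h]

lemma mem_dPts1_of_mem_nhds (hE : E ∈ 𝓝 x) (m : ℝ) : x ∈ dPts1 E m := by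
  obtain ⟨ε, hε, hball⟩ := Metric.mem_nhds_iff.mp hE
  have hnull : ∀ᶠ r in 𝓝[>] (0 : ℝ), volume (ball x r \ E) = 0 := by
    filter_upwards [Ioo_mem_nhdsGT hε] with r hr
    rw [sdiff_eq_empty.mpr ((ball_subset_ball hr.2.le).trans hball), measure_empty]
  refine tendsto_const_nhds.congr' (hnull.mono fun r hr => ?_)
  simp only [hr, ENNReal.zero_div]

lemma dDeg1_eq_top_of_mem_nhds (hE : E ∈ 𝓝 x) : dDeg1 E x = ⊤ := by
  rw [dDeg1, if_pos (mem_dPts1_of_mem_nhds hE 1)]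
  refine ENNReal.eq_top_of_forall_nnreal_le fun r =>
    le_sSup_of_le ⟨max 1 r, ⟨le_max_left _ _, mem_dPts1_of_mem_nhds hE _⟩, rfl⟩ ?_
  rw [← ENNReal.ofReal_coe_nnreal]
  exact ENNReal.ofReal_le_ofReal (le_max_right _ _)

lemma notMem_dPts1_one_of_le_volume
    (h : ∀ᶠ r in 𝓝[>] (0 : ℝ), ENNReal.ofReal r ≤ volume (ball x r \ E)) :
    x ∉ dPts1 E 1 := by
  intro hx
  refine absurd (ge_of_tendsto hx ?_) (by norm_num : ¬ (1 : ℝ≥0∞) ≤ 0)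
  filter_upwards [h, self_mem_nhdsWithin] with r hr (hr0 : 0 < r)
  rwa [Real.rpow_one, ENNReal.le_div_iff_mul_le (Or.inl (by simpa using hr0))
    (Or.inl ENNReal.ofReal_ne_top), one_mul]

lemma ofReal_le_volume_ball_diff_of_subset_Iic (hE : E ⊆ Iic x) (r : ℝ) :
    ENNReal.ofReal r ≤ volume (ball x r \ E) := by
  calc ENNReal.ofReal r = volume (Ioo x (x + r)) := by rw [Real.volume_Ioo, add_sub_cancel_left]
    _ ≤ volume (ball x r \ E) := measure_mono fun y hy =>
      ⟨by rw [Real.ball_eq_Ioo]; exact ⟨by linarith [hy.1, hy.2], hy.2⟩,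
        fun hyE => (hE hyE).not_gt hy.1⟩

lemma ofReal_le_volume_ball_diff_of_subset_Ici (hE : E ⊆ Ici x) (r : ℝ) :
    ENNReal.ofReal r ≤ volume (ball x r \ E) := by
  calc ENNReal.ofReal r = volume (Ioo (x - r) x) := by rw [Real.volume_Ioo]; ring_nf
    _ ≤ volume (ball x r \ E) := measure_mono fun y hy =>
      ⟨by rw [Real.ball_eq_Ioo]; exact ⟨hy.1, by linarith [hy.1, hy.2]⟩,
        fun hyE => (hE hyE).not_gt hy.2⟩

lemma dDeg1_eq_zero_of_subset_Iic_or_Ici (hE : E ⊆ Iic x ∨ E ⊆ Ici x) : dDeg1 E x = 0 := by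
  refine if_neg (notMem_dPts1_one_of_le_volume (Eventually.of_forall fun r => ?_))
  rcases hE with hE | hE
  · exact ofReal_le_volume_ball_diff_of_subset_Iic hE r
  · exact ofReal_le_volume_ball_diff_of_subset_Ici hE r

lemma dDeg1_Ioo (a b : ℝ) : dDeg1 (Ioo a b) = (Ioo a b).indicator fun _ => ⊤ := by
  funext x
  by_cases hx : x ∈ Ioo a b
  · rw [indicator_of_mem hx, dDeg1_eq_top_of_mem_nhds (isOpen_Ioo.mem_nhds hx)]
  · rw [indicator_of_notMem hx, dDeg1_eq_zero_of_subset_Iic_or_Ici]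
    rw [mem_Ioo, not_and_or, not_lt, not_lt] at hx
    rcases hx with hx | hx
    · exact Or.inr fun y hy => hx.trans hy.1.le
    · exact Or.inl fun y hy => hy.2.le.trans hx

lemma max_indicator_top {α : Type*} (s t : Set α) (x : α) :
    max (s.indicator (fun _ => (⊤ : ℝ≥0∞)) x) (t.indicator (fun _ => ⊤) x) =
      (s ∪ t).indicator (fun _ => ⊤) x := by
  by_cases hs : x ∈ s <;> by_cases ht : x ∈ t <;> simp [hs, ht]

lemma Ioo_union_Ioo_eq_Ioo_sdiff {α : Type*} [LinearOrder α] {a b c : α} (hab : a < b) (hbc : b < c) :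
    Ioo a b ∪ Ioo b c = Ioo a c \ {b} := by
  ext y
  simp only [mem_union, mem_Ioo, Set.mem_sdiff, mem_singleton_iff]
  grind

theorem densityDeg_union_counterexample :
    dDeg1 (Ioo (-1 : ℝ) 0 ∪ Ioo 0 1) = (Ioo (-1 : ℝ) 1).indicator (fun _ => (⊤ : ℝ≥0∞)) ∧
    (fun x => max (dDeg1 (Ioo (-1 : ℝ) 0) x) (dDeg1 (Ioo (0 : ℝ) 1) x)) =
      (Ioo (-1 : ℝ) 1 \ {0}).indicator (fun _ => (⊤ : ℝ≥0∞)) ∧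
    dDeg1 (Ioo (-1 : ℝ) 0 ∪ Ioo 0 1) ≠
      fun x => max (dDeg1 (Ioo (-1 : ℝ) 0) x) (dDeg1 (Ioo (0 : ℝ) 1) x) := by
  have hunion : Ioo (-1 : ℝ) 0 ∪ Ioo 0 1 = Ioo (-1) 1 \ {0} :=
    Ioo_union_Ioo_eq_Ioo_sdiff (by norm_num) (by norm_num)
  have hdeg : dDeg1 (Ioo (-1 : ℝ) 0 ∪ Ioo 0 1) = (Ioo (-1 : ℝ) 1).indicator fun _ => ⊤ := by
    rw [hunion, dDeg1_congr_ae (sdiff_null_ae_eq_self (measure_singleton 0)), dDeg1_Ioo]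
  have hmax : (fun x => max (dDeg1 (Ioo (-1 : ℝ) 0) x) (dDeg1 (Ioo (0 : ℝ) 1) x)) =
      (Ioo (-1 : ℝ) 1 \ {0}).indicator fun _ => ⊤ := by
    funext x
    rw [dDeg1_Ioo, dDeg1_Ioo, max_indicator_top, hunion]
  refine ⟨hdeg, hmax, fun h => ?_⟩
  have h0 := congrFun (hdeg.symm.trans (h.trans hmax)) 0
  rw [indicator_of_mem (by norm_num : (0 : ℝ) ∈ Ioo (-1) 1),
    indicator_of_notMem (by simp : (0 : ℝ) ∉ Ioo (-1 : ℝ) 1 \ {0})] at h0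
  exact ENNReal.top_ne_zero h0
end
end

section
/- Let m ∈ (2, +∞) and E := {(x₁, x₂) ∈ ℝ² : |x₂| > |x₁|^{m−1}}. Then the limit lim_{r→0⁺} 𝓛²(B(0,r) \ E)/rᵐ exists and lies in (0, +∞); consequently d_E(0) = m but 0 is not an m-density point of E. -/
open MeasureTheory Metric Filter Set Topology ENNReal

noncomputable section

/-! Identifying `ℝ²` with `ℝ × ℝ`, the set `B(0,r) \ E` is the closed cusp `|x₂| ≤ |x₁|^(m-1)` cut
off by the disc of radius `r`. It lies in the part of the cusp over `|x₁| < r` and, for `r ≤ 1`,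
contains the part over `|x₁| < c` with `c = r √(1 - r^(2(m-2)))`, since then `c² + r^(2(m-1)) = r²`.
The part over `|x₁| < c` has area `∫_{-c}^{c} 2|t|^(m-1) dt = 4cᵐ/m`, so the ratio tends to `4/m`.
A finite positive limit at the exponent `m` forces the ratio at an exponent `p` to tend to `0` when
`p < m` (it is multiplied by `r^(m-p) → 0`) and keeps it away from `0` when `p ≥ m`, whence
`d_E(0) = m` and `0 ∉ E^(m)`. -/

section RegionBetween

variable {α : Type*} [MeasurableSpace α] {μ : Measure α} {f g : α → ℝ} {s : Set α}

theorem volume_region_between_cc_eq_lintegral (hf : Measurable f) (hg : Measurable g)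
    (hs : MeasurableSet s) :
    μ.prod volume {p : α × ℝ | p.1 ∈ s ∧ p.2 ∈ Icc (f p.1) (g p.1)} =
      ∫⁻ y in s, ENNReal.ofReal ((g - f) y) ∂μ := by
  rw [Measure.prod_apply (measurableSet_region_between_cc hf hg hs),
    ← lintegral_indicator hs]
  congr 1
  funext x
  by_cases hx : x ∈ s
  · rw [indicator_of_mem hx, preimage_ofPred_eq]
    simp only [hx, true_and, ofPred_mem_eq, Real.volume_Icc, Pi.sub_apply]
  · simp [hx]

end RegionBetween

theorem integral_abs_rpow {p c : ℝ} (hp : 0 ≤ p) (hc : 0 ≤ c) :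
    ∫ x in -c..c, |x| ^ p = 2 * (c ^ (p + 1) / (p + 1)) := by
  have hcont : Continuous fun x : ℝ => |x| ^ p := continuous_abs.rpow_const fun _ => Or.inr hp
  have hright : ∫ x in (0 : ℝ)..c, |x| ^ p = c ^ (p + 1) / (p + 1) := by
    rw [intervalIntegral.integral_congr (g := fun x => x ^ p) fun x hx => by
        rw [uIcc_of_le hc] at hx; rw [abs_of_nonneg hx.1],
      integral_rpow (Or.inl (by linarith)), Real.zero_rpow (by linarith), sub_zero]
  have hleft : ∫ x in -c..0, |x| ^ p = c ^ (p + 1) / (p + 1) := by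
    have := intervalIntegral.integral_comp_neg (a := 0) (b := c) fun x => |x| ^ p
    simp only [abs_neg, neg_zero] at this
    rw [← this, hright]
  rw [← intervalIntegral.integral_add_adjacent_intervals (b := 0) (hcont.intervalIntegrable _ _)
    (hcont.intervalIntegrable _ _), hleft, hright, two_mul]

def cuspRegion (m c : ℝ) : Set (ℝ × ℝ) :=
  {q | q.1 ∈ Ioo (-c) c ∧ q.2 ∈ Icc (-|q.1| ^ (m - 1)) (|q.1| ^ (m - 1))}

theorem volume_cuspRegion {m c : ℝ} (hm : 1 ≤ m) (hc : 0 ≤ c) :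
    volume (cuspRegion m c) = ENNReal.ofReal (4 / m * c ^ m) := by
  have hcont : Continuous fun x : ℝ => |x| ^ (m - 1) :=
    continuous_abs.rpow_const fun _ => Or.inr (sub_nonneg.2 hm)
  rw [Measure.volume_eq_prod, cuspRegion,
    volume_region_between_cc_eq_lintegral (f := fun x => -(|x| ^ (m - 1))) hcont.measurable.neg
      hcont.measurable measurableSet_Ioo,
    ← ofReal_integral_eq_lintegral_ofReal, ← integral_Ioc_eq_integral_Ioo,
    ← intervalIntegral.integral_of_le (by linarith)]
  · simp only [Pi.sub_apply, sub_neg_eq_add, ← two_mul, intervalIntegral.integral_const_mul]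
    rw [integral_abs_rpow (sub_nonneg.2 hm) hc, sub_add_cancel]
    ring_nf
  · exact ((hcont.sub hcont.neg).integrableOn_Icc (μ := volume)).mono_set Ioo_subset_Icc_self
  · exact Eventually.of_forall fun x => by simp only [Pi.sub_apply, sub_neg_eq_add]; positivity

section DensityDegree

variable {n : ℕ} {E : Set (EuclideanSpace ℝ (Fin n))} {x : EuclideanSpace ℝ (Fin n)}
  {f : ℝ → ℝ≥0∞} {L : ℝ≥0∞} {m p : ℝ}

lemma div_ofReal_rpow_eq_mul (a : ℝ≥0∞) {r : ℝ} (hr : 0 < r) (p q : ℝ) :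
    a / ENNReal.ofReal (r ^ p) = a / ENNReal.ofReal (r ^ q) * ENNReal.ofReal (r ^ (q - p)) := by
  have hsplit :
      ENNReal.ofReal (r ^ q) = ENNReal.ofReal (r ^ p) * ENNReal.ofReal (r ^ (q - p)) := by
    rw [← ENNReal.ofReal_mul (by positivity), ← Real.rpow_add hr, add_sub_cancel]
  rw [hsplit, ← ENNReal.mul_div_right_comm, ENNReal.mul_div_mul_right]
  · exact (ENNReal.ofReal_pos.2 (by positivity)).ne'
  · exact ENNReal.ofReal_ne_top

lemma div_ofReal_rpow_le_div_ofReal_rpow (a : ℝ≥0∞) {r : ℝ} (hr₀ : 0 < r) (hr₁ : r ≤ 1)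
    {p q : ℝ} (hpq : p ≤ q) : a / ENNReal.ofReal (r ^ p) ≤ a / ENNReal.ofReal (r ^ q) :=
  ENNReal.div_le_div_left
    (ENNReal.ofReal_le_ofReal (Real.rpow_le_rpow_of_exponent_ge hr₀ hr₁ hpq)) a

lemma tendsto_div_ofReal_rpow_zero_of_lt
    (hf : Tendsto (fun r => f r / ENNReal.ofReal (r ^ m)) (𝓝[>] 0) (𝓝 L)) (hL : L ≠ ⊤)
    (hp : p < m) : Tendsto (fun r => f r / ENNReal.ofReal (r ^ p)) (𝓝[>] 0) (𝓝 0) := by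
  have hpow : Tendsto (fun r : ℝ => ENNReal.ofReal (r ^ (m - p))) (𝓝[>] 0) (𝓝 0) := by
    have := (Real.continuousAt_rpow_const 0 (m - p) (Or.inr (sub_pos.2 hp).le)).tendsto.mono_left
      (nhdsWithin_le_nhds (s := Ioi 0))
    simpa [Real.zero_rpow (sub_pos.2 hp).ne'] using ENNReal.tendsto_ofReal this
  have := ENNReal.Tendsto.mul hf (Or.inr ENNReal.zero_ne_top) hpow (Or.inr hL)
  rw [mul_zero] at this
  refine this.congr' ?_
  filter_upwards [self_mem_nhdsWithin] with r hr
  exact (div_ofReal_rpow_eq_mul (f r) hr p m).symm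

lemma mem_dPts_of_tendsto
    (h : Tendsto (fun r => volume (ball x r \ E) / ENNReal.ofReal (r ^ m)) (𝓝[>] 0) (𝓝 L))
    (hL : L ≠ ⊤) (hp : p < m) : x ∈ dPts n E p :=
  tendsto_div_ofReal_rpow_zero_of_lt h hL hp

lemma notMem_dPts_of_tendsto
    (h : Tendsto (fun r => volume (ball x r \ E) / ENNReal.ofReal (r ^ m)) (𝓝[>] 0) (𝓝 L))
    (hL : L ≠ 0) (hp : m ≤ p) : x ∉ dPts n E p := by
  intro hx
  refine hL (le_antisymm (le_of_tendsto_of_tendsto h hx ?_) bot_le)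
  filter_upwards [Ioc_mem_nhdsGT (zero_lt_one' ℝ)] with r hr
  exact div_ofReal_rpow_le_div_ofReal_rpow _ hr.1 hr.2 hp

lemma dDeg_eq_of_tendsto
    (h : Tendsto (fun r => volume (ball x r \ E) / ENNReal.ofReal (r ^ m)) (𝓝[>] 0) (𝓝 L))
    (hL₀ : L ≠ 0) (hL : L ≠ ⊤) (hnm : (n : ℝ) < m) : dDeg n E x = ENNReal.ofReal m := by
  have hdeg : {p : ℝ | (n : ℝ) ≤ p ∧ x ∈ dPts n E p} = Ico (n : ℝ) m := by
    ext p
    exact ⟨fun hp => ⟨hp.1, lt_of_not_ge fun hmp => notMem_dPts_of_tendsto h hL₀ hmp hp.2⟩,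
      fun hp => ⟨hp.1, mem_dPts_of_tendsto h hL hp.2⟩⟩
  rw [dDeg, if_pos (mem_dPts_of_tendsto h hL hnm), hdeg,
    ← Monotone.map_csSup_of_continuousAt ENNReal.continuous_ofReal.continuousAt
      ENNReal.ofReal_mono (nonempty_Ico.2 hnm) bddAbove_Ico, csSup_Ico hnm]

end DensityDegree

def euclideanFinTwoEquivProd : EuclideanSpace ℝ (Fin 2) ≃ᵐ ℝ × ℝ :=
  (MeasurableEquiv.toLp 2 (Fin 2 → ℝ)).symm.trans MeasurableEquiv.finTwoArrow

theorem measurePreserving_euclideanFinTwoEquivProd :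
    MeasurePreserving euclideanFinTwoEquivProd volume volume :=
  (volume_preserving_finTwoArrow ℝ).comp
    (EuclideanSpace.volume_preserving_symm_measurableEquiv_toLp (Fin 2))

def cuspExterior (m : ℝ) : Set (EuclideanSpace ℝ (Fin 2)) :=
  {p | |p 1| > |p 0| ^ (m - 1)}

section Cusp

variable {m r c : ℝ}

theorem ball_diff_cuspExterior_subset :
    ball 0 r \ cuspExterior m ⊆ euclideanFinTwoEquivProd ⁻¹' cuspRegion m r := by
  rintro p ⟨hball, hcusp⟩
  rw [mem_ball_zero_iff] at hball
  exact ⟨abs_lt.1 ((PiLp.norm_apply_le p 0).trans_lt hball), abs_le.1 (not_lt.1 hcusp)⟩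

theorem preimage_cuspRegion_subset_ball_diff (hm : 1 ≤ m) (hr : 0 ≤ r)
    (hcr : c ^ 2 + (c ^ (m - 1)) ^ 2 ≤ r ^ 2) :
    euclideanFinTwoEquivProd ⁻¹' cuspRegion m c ⊆ ball 0 r \ cuspExterior m := by
  rintro p ⟨hx, hcusp⟩
  have hp₀ : |p 0| < c := abs_lt.2 hx
  have hp₁ : |p 1| ≤ c ^ (m - 1) :=
    (abs_le.2 hcusp).trans (Real.rpow_le_rpow (abs_nonneg _) hp₀.le (sub_nonneg.2 hm))
  refine ⟨mem_ball_zero_iff.2 ((pow_lt_pow_iff_left₀ (norm_nonneg p) hr two_ne_zero).1 ?_),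
    not_lt.2 (abs_le.2 hcusp)⟩
  rw [EuclideanSpace.real_norm_sq_eq, Fin.sum_univ_two, ← sq_abs (p 0), ← sq_abs (p 1)]
  calc |p 0| ^ 2 + |p 1| ^ 2 < c ^ 2 + (c ^ (m - 1)) ^ 2 :=
        add_lt_add_of_lt_of_le (pow_lt_pow_left₀ hp₀ (abs_nonneg _) two_ne_zero)
          (pow_le_pow_left₀ (abs_nonneg _) hp₁ 2)
    _ ≤ r ^ 2 := hcr

theorem volume_ball_diff_cuspExterior_le (hm : 1 ≤ m) (hr : 0 ≤ r) :
    volume (ball 0 r \ cuspExterior m) ≤ ENNReal.ofReal (4 / m * r ^ m) := by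
  rw [← volume_cuspRegion hm hr,
    ← measurePreserving_euclideanFinTwoEquivProd.measure_preimage_equiv]
  exact measure_mono ball_diff_cuspExterior_subset

theorem le_volume_ball_diff_cuspExterior (hm : 1 ≤ m) (hc : 0 ≤ c) (hr : 0 ≤ r)
    (hcr : c ^ 2 + (c ^ (m - 1)) ^ 2 ≤ r ^ 2) :
    ENNReal.ofReal (4 / m * c ^ m) ≤ volume (ball 0 r \ cuspExterior m) := by
  rw [← volume_cuspRegion hm hc,
    ← measurePreserving_euclideanFinTwoEquivProd.measure_preimage_equiv]
  exact measure_mono (preimage_cuspRegion_subset_ball_diff hm hr hcr)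

theorem sq_add_sq_rpow_mul_sqrt_le (hm : 2 ≤ m) (hr₀ : 0 ≤ r) (hr₁ : r ≤ 1) :
    (r * √(1 - r ^ (2 * (m - 2)))) ^ 2 + ((r * √(1 - r ^ (2 * (m - 2)))) ^ (m - 1)) ^ 2 ≤
      r ^ 2 := by
  set s := √(1 - r ^ (2 * (m - 2)))
  have hpow : r ^ (2 * (m - 2)) ≤ 1 := Real.rpow_le_one hr₀ hr₁ (by linarith)
  have hs₁ : s ≤ 1 := Real.sqrt_le_one.2 (by linarith [Real.rpow_nonneg hr₀ (2 * (m - 2))])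
  have hs_sq : s ^ 2 = 1 - r ^ (2 * (m - 2)) := Real.sq_sqrt (by linarith)
  have hrs : (r * s) ^ (m - 1) ≤ r ^ (m - 1) :=
    Real.rpow_le_rpow (by positivity) (mul_le_of_le_one_right hr₀ hs₁) (by linarith)
  have hr_pow : (r ^ (m - 1)) ^ 2 = r ^ 2 * r ^ (2 * (m - 2)) := by
    rw [← Real.rpow_mul_natCast hr₀, ← Real.rpow_natCast r 2,
      ← Real.rpow_add' hr₀ (by push_cast; linarith)]
    ring_nf
  calc (r * s) ^ 2 + ((r * s) ^ (m - 1)) ^ 2 ≤ r ^ 2 * s ^ 2 + (r ^ (m - 1)) ^ 2 := by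
        rw [mul_pow]; gcongr
    _ = r ^ 2 := by rw [hs_sq, hr_pow]; ring

theorem tendsto_volume_ball_diff_cuspExterior (hm : 2 < m) :
    Tendsto (fun r => volume (ball 0 r \ cuspExterior m) / ENNReal.ofReal (r ^ m)) (𝓝[>] 0)
      (𝓝 (ENNReal.ofReal (4 / m))) := by
  have hlower : Tendsto (fun r : ℝ => ENNReal.ofReal (4 / m * √(1 - r ^ (2 * (m - 2))) ^ m))
      (𝓝[>] 0) (𝓝 (ENNReal.ofReal (4 / m))) := by
    have hcont : Continuous fun r : ℝ => 4 / m * √(1 - r ^ (2 * (m - 2))) ^ m :=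
      continuous_const.mul
        ((continuous_const.sub (Real.continuous_rpow_const (by linarith))).sqrt.rpow_const
          fun _ => Or.inr (by linarith))
    have := ENNReal.tendsto_ofReal ((hcont.tendsto 0).mono_left (nhdsWithin_le_nhds (s := Ioi 0)))
    simpa [Real.zero_rpow (by linarith : 2 * (m - 2) ≠ 0)] using this
  refine tendsto_of_tendsto_of_tendsto_of_le_of_le' hlower tendsto_const_nhds ?_ ?_ <;>
    filter_upwards [Ioc_mem_nhdsGT zero_lt_one] with r ⟨hr₀, hr₁⟩
  · have hs₀ : 0 ≤ √(1 - r ^ (2 * (m - 2))) := Real.sqrt_nonneg _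
    calc ENNReal.ofReal (4 / m * √(1 - r ^ (2 * (m - 2))) ^ m)
        = ENNReal.ofReal (4 / m * (r * √(1 - r ^ (2 * (m - 2)))) ^ m) /
            ENNReal.ofReal (r ^ m) := by
          rw [← ENNReal.ofReal_div_of_pos (by positivity), Real.mul_rpow hr₀.le hs₀]
          field_simp
      _ ≤ _ := ENNReal.div_le_div_right (le_volume_ball_diff_cuspExterior (by linarith)
          (by positivity) hr₀.le (sq_add_sq_rpow_mul_sqrt_le hm.le hr₀.le hr₁)) _
  · calc volume (ball 0 r \ cuspExterior m) / ENNReal.ofReal (r ^ m)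
        ≤ ENNReal.ofReal (4 / m * r ^ m) / ENNReal.ofReal (r ^ m) :=
          ENNReal.div_le_div_right (volume_ball_diff_cuspExterior_le (by linarith) hr₀.le) _
      _ = ENNReal.ofReal (4 / m) := by
          rw [← ENNReal.ofReal_div_of_pos (by positivity)]
          field_simp

end Cusp

theorem densityDeg_cusp_example (m : ℝ) (hm : 2 < m) :
    ∃ L : ℝ≥0∞,
      Tendsto
        (fun r : ℝ =>
          volume ((ball (0 : EuclideanSpace ℝ (Fin 2)) r) \
            {p : EuclideanSpace ℝ (Fin 2) | |p 1| > |p 0| ^ (m - 1)}) /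
          ENNReal.ofReal (r ^ m))
        (𝓝[>] 0) (𝓝 L) ∧ 0 < L ∧ L < ⊤ ∧
      dDeg 2 {p : EuclideanSpace ℝ (Fin 2) | |p 1| > |p 0| ^ (m - 1)} 0 = ENNReal.ofReal m ∧
      (0 : EuclideanSpace ℝ (Fin 2)) ∉
        dPts 2 {p : EuclideanSpace ℝ (Fin 2) | |p 1| > |p 0| ^ (m - 1)} m := by
  have hlim := tendsto_volume_ball_diff_cuspExterior hm
  have hL₀ : ENNReal.ofReal (4 / m) ≠ 0 :=
    (ENNReal.ofReal_pos.2 (div_pos four_pos (by linarith))).ne'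
  exact ⟨_, hlim, pos_iff_ne_zero.2 hL₀, ENNReal.ofReal_lt_top,
    dDeg_eq_of_tendsto hlim hL₀ ENNReal.ofReal_ne_top (by exact_mod_cast hm),
    notMem_dPts_of_tendsto hlim hL₀ le_rfl⟩
end
end

section
/- Let F ⊆ ℝⁿ be measurable with 0 < ‖d_F‖_∞ < +∞ and let m ∈ (‖d_F‖_∞, +∞). Then there is no measurable set E ⊆ ℝⁿ with d_E = m·χ_F almost everywhere. -/
/-!
By the Lebesgue density theorem, almost every point of a measurable set `E` is an `n`-density
point of `E` and almost no point outside `E` is one, while `d_E` is nonzero exactly at the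
`n`-density points. So `d_E = m χ_F` a.e. with `m > 0` forces `E = F` a.e., hence `d_E = d_F`,
because `d_E` only sees the measures `𝓛ⁿ(B(x,r) \ E)`. Then `‖d_F‖_∞ = ‖m χ_F‖_∞ < m` makes `F`
null, so `‖d_F‖_∞ = 0`.
-/

open MeasureTheory Metric Filter Set Topology ENNReal

noncomputable section

lemma essSup_indicator_const_eq_zero_of_lt {α : Type*} [MeasurableSpace α] {μ : Measure α}
    {s : Set α} {c : ℝ≥0∞} (h : essSup (s.indicator fun _ => c) μ < c) :
    essSup (s.indicator fun _ => c) μ = 0 := by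
  have hzero : s.indicator (fun _ => c) =ᵐ[μ] 0 := by
    filter_upwards [ae_lt_of_essSup_lt h] with x hx
    by_cases hxs : x ∈ s
    · simp [hxs] at hx
    · simp [hxs]
  rw [essSup_congr_ae hzero]
  exact essSup_const_bot

section DensityPoints

variable {n : ℕ} {E F : Set (EuclideanSpace ℝ (Fin n))} {x : EuclideanSpace ℝ (Fin n)}

lemma volume_ball_diff_eq_volume_closedBall_diff {r : ℝ} (hr : 0 < r) :
    volume (ball x r \ E) = volume (closedBall x r \ E) := by
  refine le_antisymm (measure_mono (sdiff_subset_sdiff_left ball_subset_closedBall)) ?_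
  have hsub : closedBall x r \ E ⊆ (ball x r \ E) ∪ sphere x r := by
    rintro y ⟨hy, hyE⟩
    rcases (mem_closedBall.1 hy).lt_or_eq with hlt | heq
    · exact Or.inl ⟨hlt, hyE⟩
    · exact Or.inr heq
  calc volume (closedBall x r \ E) ≤ volume (ball x r \ E) + volume (sphere x r) :=
        (measure_mono hsub).trans (measure_union_le _ _)
    _ = volume (ball x r \ E) := by
        rw [Measure.addHaar_sphere_of_ne_zero volume x hr.ne', add_zero]

lemma mem_dPts_self_iff_tendsto_density_compl :
    x ∈ dPts n E n ↔
      Tendsto (fun r => volume (Eᶜ ∩ closedBall x r) / volume (closedBall x r))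
        (𝓝[>] (0 : ℝ)) (𝓝 0) := by
  set c := volume (ball (0 : EuclideanSpace ℝ (Fin n)) 1)
  have hc0 : c ≠ 0 := (measure_ball_pos volume _ one_pos).ne'
  have hctop : c ≠ ⊤ := measure_ball_lt_top.ne
  have hratio : (fun r => volume (Eᶜ ∩ closedBall x r) / volume (closedBall x r))
      =ᶠ[𝓝[>] (0 : ℝ)]
      fun r => volume (ball x r \ E) / ENNReal.ofReal (r ^ (n : ℝ)) * c⁻¹ := by
    filter_upwards [self_mem_nhdsWithin] with r (hr : 0 < r)
    rw [inter_comm, ← sdiff_eq, ← volume_ball_diff_eq_volume_closedBall_diff hr,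
      Measure.addHaar_closedBall volume x hr.le, finrank_euclideanSpace_fin,
      ← Real.rpow_natCast r n, div_eq_mul_inv _ (_ * c),
      ENNReal.mul_inv (Or.inr hctop) (Or.inl ENNReal.ofReal_ne_top), ← mul_assoc,
      div_eq_mul_inv]
  rw [tendsto_congr' hratio]
  constructor
  · intro h
    simpa using ENNReal.Tendsto.mul_const h (Or.inr (ENNReal.inv_ne_top.2 hc0))
  · intro h
    have hmul := ENNReal.Tendsto.mul_const (b := c) h (Or.inr hctop)
    rw [zero_mul] at hmul
    exact hmul.congr fun r => by rw [mul_assoc, ENNReal.inv_mul_cancel hc0 hctop, mul_one]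

lemma ae_mem_dPts_self_iff_mem (hE : MeasurableSet E) :
    ∀ᵐ x ∂volume, x ∈ dPts n E n ↔ x ∈ E := by
  filter_upwards [Besicovitch.ae_tendsto_measure_inter_div_of_measurableSet volume hE.compl]
    with x hx
  rw [mem_dPts_self_iff_tendsto_density_compl]
  by_cases hxE : x ∈ E
  · simpa [hxE] using hx
  · simp only [indicator_of_mem (show x ∈ Eᶜ from hxE), Pi.one_apply] at hx
    simpa [hxE] using fun h => zero_ne_one (tendsto_nhds_unique h hx)

/-- In dimension `0` every ball of positive radius is the whole (one-point) space, so the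
`0`-density condition already says that `E` is conull. -/
lemma mem_dPts_of_mem_dPts_zero {E : Set (EuclideanSpace ℝ (Fin 0))}
    {x : EuclideanSpace ℝ (Fin 0)} (h : x ∈ dPts 0 E 0) (m : ℝ) : x ∈ dPts 0 E m := by
  have hball : ∀ r : ℝ, 0 < r → ball x r = univ := fun r hr =>
    eq_univ_of_forall fun y => by simpa [Subsingleton.elim y x] using hr
  have hconst : Tendsto (fun _ : ℝ => volume (univ \ E)) (𝓝[>] 0) (𝓝 0) := by
    refine h.congr' ?_
    filter_upwards [self_mem_nhdsWithin] with r (hr : 0 < r)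
    simp [hball r hr]
  have hnull : volume (univ \ E) = 0 := tendsto_nhds_unique tendsto_const_nhds hconst
  refine tendsto_const_nhds.congr' ?_
  filter_upwards [self_mem_nhdsWithin] with r (hr : 0 < r)
  rw [hball r hr, hnull, ENNReal.zero_div]

lemma dDeg_ne_zero_iff : dDeg n E x ≠ 0 ↔ x ∈ dPts n E n := by
  refine ⟨fun h => by_contra fun hx => h (by rw [dDeg, if_neg hx]), fun h => ?_⟩
  obtain ⟨k, hk, hnk, hxk⟩ : ∃ k : ℝ, 0 < k ∧ (n : ℝ) ≤ k ∧ x ∈ dPts n E k := by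
    rcases n.eq_zero_or_pos with rfl | hn
    · exact ⟨1, one_pos, by norm_num, mem_dPts_of_mem_dPts_zero (by rwa [Nat.cast_zero] at h) 1⟩
    · exact ⟨n, Nat.cast_pos.2 hn, le_rfl, h⟩
  have hle : ENNReal.ofReal k ≤ dDeg n E x := by
    rw [dDeg, if_pos h]
    exact le_sSup ⟨k, ⟨hnk, hxk⟩, rfl⟩
  exact ((ENNReal.ofReal_pos.2 hk).trans_le hle).ne'

lemma ae_dDeg_ne_zero_iff_mem (hE : MeasurableSet E) :
    ∀ᵐ x ∂volume, dDeg n E x ≠ 0 ↔ x ∈ E := by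
  filter_upwards [ae_mem_dPts_self_iff_mem hE] with x hx
  rw [dDeg_ne_zero_iff, hx]

lemma dDeg_congr_ae (hEF : E =ᵐ[volume] F) : dDeg n E = dDeg n F := by
  have hpts : dPts n E = dPts n F := by
    ext m x
    have hvol : ∀ r : ℝ, volume (ball x r \ E) = volume (ball x r \ F) := fun r =>
      measure_congr (EventuallyEq.rfl.diff hEF)
    simp only [dPts, mem_ofPred_eq, hvol]
  unfold dDeg
  rw [hpts]

end DensityPoints

theorem no_set_with_prescribed_densityDeg_general (n : ℕ) (F : Set (EuclideanSpace ℝ (Fin n)))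
    (h0 : 0 < essSup (dDeg n F) volume)
    (m : ℝ) (hm : essSup (dDeg n F) volume < ENNReal.ofReal m) :
    ¬ ∃ E : Set (EuclideanSpace ℝ (Fin n)), MeasurableSet E ∧
      ∀ᵐ x ∂volume, dDeg n E x = F.indicator (fun _ => ENNReal.ofReal m) x := by
  rintro ⟨E, hE, hae⟩
  have hm0 : ENNReal.ofReal m ≠ 0 := (h0.trans hm).ne'
  have hEF : E =ᵐ[volume] F := by
    refine eventuallyEq_set.2 ?_
    filter_upwards [ae_dDeg_ne_zero_iff_mem hE, hae] with x hxE hx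
    rw [← hxE, hx, indicator_apply_ne_zero]
    simp [hm0]
  rw [← dDeg_congr_ae hEF, essSup_congr_ae hae] at h0 hm
  exact h0.ne' (essSup_indicator_const_eq_zero_of_lt hm)

theorem no_set_with_prescribed_densityDeg (n : ℕ) (F : Set (EuclideanSpace ℝ (Fin n)))
    (hF : MeasurableSet F)
    (h0 : 0 < essSup (dDeg n F) volume) (hfin : essSup (dDeg n F) volume < ⊤)
    (m : ℝ) (hm : essSup (dDeg n F) volume < ENNReal.ofReal m) :
    ¬ ∃ E : Set (EuclideanSpace ℝ (Fin n)), MeasurableSet E ∧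
      ∀ᵐ x ∂volume, dDeg n E x = F.indicator (fun _ => ENNReal.ofReal m) x :=
  no_set_with_prescribed_densityDeg_general n F h0 m hm
end
end
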